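/- Let f: A* → A* be a morphism with iterative fixed point w = f^ω(α), and let X be the shift orbit closure of w. For every x ∈ X there exist a letter a ∈ A, a nonempty suffix s of f(a), and y ∈ X such that x = s·f(y) and a·y ∈ X. -/

import Mathlib

/-- A morphism on `A*`, given by its values on letters, extended to words. -/
def morphW {A : Type*} (f : A → List A) (w : List A) : List A := w.flatMap f

/-- The finite word `u` is a prefix of the infinite word `x`. -/
def IsPrefixI {A : Type*} (u : List A) (x : ℕ → A) : Prop :=
  ∀ i, (h : i < u.length) → u.get ⟨i, h⟩ = x i

/-- The finite word `u` is a factor of the infinite word `x`. -/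
def IsFactorI {A : Type*} (u : List A) (x : ℕ → A) : Prop :=
  ∃ k, ∀ i, (h : i < u.length) → u.get ⟨i, h⟩ = x (k + i)

/-- Prepend a letter to an infinite word. -/
def consI {A : Type*} (a : A) (x : ℕ → A) : ℕ → A :=
  fun n => if n = 0 then a else x (n - 1)

/-- `x` is in the shift orbit closure of the infinite word `w`. -/
def InOrbitClosure {A : Type*} (x w : ℕ → A) : Prop :=
  ∀ u : List A, IsFactorI u x → IsFactorI u w

/-- The infinite word `x` equals `s · f(y)`, where `f` is the morphism generated by
`fA` and `y` is an infinite word: every word `s · f(y₀ y₁ ⋯ y_{n-1})` is a prefix of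
`x`, and these words have unbounded length. -/
def EqSuffixImage {A : Type*} (x : ℕ → A) (s : List A) (fA : A → List A)
    (y : ℕ → A) : Prop :=
  (∀ n : ℕ, IsPrefixI (s ++ morphW fA (List.ofFn fun i : Fin n => y i)) x) ∧
  ∀ m : ℕ, ∃ n : ℕ, m < (s ++ morphW fA (List.ofFn fun i : Fin n => y i)).length

/-!
A long prefix of `x` is a factor of some `f^n(α) = f(f^(n-1)(α))`, hence of the form
`s · f(z) · t` with `s` a nonempty suffix of a block `f(a)`, `a z` a factor of `w` and `t` short.
Only finitely many pairs `(a, s)` occur, so one of them occurs with arbitrarily long `z`; these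
`z` form a prefix-closed tree, and Kőnig's lemma gives `y`.

That `s · f(y)` is infinite follows from a bound on runs of erased letters in `w`. For some `k`,
every letter dying after `k + 1` applications of `f` already dies after `k`. A long erased factor
of `w = f^k(f^(n-k)(α))` contains a whole nonempty block `f^k(c)`, and then `c` dies after `k + 1`
applications but not after `k`.
-/

lemma exists_le_lt_of_unbounded (g : ℕ → ℕ) (h : ∀ m, ∃ n, m < g n) (j M : ℕ) :
    ∃ n, j ≤ n ∧ M < g n := by
  obtain ⟨n, hn⟩ := h (M + ∑ i ∈ Finset.range j, g i)
  refine ⟨n, ?_, by omega⟩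
  by_contra! hnj
  have := Finset.single_le_sum (fun i _ => Nat.zero_le (g i)) (Finset.mem_range.2 hnj)
  omega

lemma exists_forall_of_forall_exists_antitone {ι : Type*} [Finite ι] {P : ι → ℕ → Prop}
    (hP : ∀ i, Antitone (P i)) (h : ∀ m, ∃ i, P i m) : ∃ i, ∀ m, P i m := by
  by_contra! hc
  choose M hM using hc
  obtain ⟨N, hN⟩ := Finite.exists_le M
  obtain ⟨i, hi⟩ := h N
  exact hM i (hP i (hN i) hi)

section InfiniteWords
variable {A : Type*}

def takeI (x : ℕ → A) (n : ℕ) : List A := List.ofFn fun i : Fin n => x i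

@[simp] lemma length_takeI (x : ℕ → A) (n : ℕ) : (takeI x n).length = n := List.length_ofFn

@[simp] lemma getElem_takeI (x : ℕ → A) (n i : ℕ) (h : i < (takeI x n).length) :
    (takeI x n)[i] = x i := List.getElem_ofFn ..

lemma takeI_add (x : ℕ → A) (m n : ℕ) :
    takeI x (m + n) = takeI x m ++ takeI (fun i => x (m + i)) n := by
  simp [takeI, List.ofFn_add]

lemma takeI_prefix_takeI (x : ℕ → A) {m n : ℕ} (h : m ≤ n) : takeI x m <+: takeI x n := by
  obtain ⟨k, rfl⟩ := Nat.exists_eq_add_of_le h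
  rw [takeI_add]
  exact List.prefix_append _ _

lemma takeI_consI_succ (a : A) (x : ℕ → A) (n : ℕ) :
    takeI (consI a x) (n + 1) = a :: takeI x n := by
  simp [takeI, List.ofFn_succ, consI]

lemma isPrefixI_iff {u : List A} {x : ℕ → A} : IsPrefixI u x ↔ u = takeI x u.length := by
  refine ⟨fun h => List.ext_getElem (by simp) fun i h₁ _ => by simpa using h i h₁,
    fun h i hi => ?_⟩
  rw [List.get_eq_getElem, List.getElem_of_eq h]
  simp

lemma isPrefixI_takeI (x : ℕ → A) (n : ℕ) : IsPrefixI (takeI x n) x :=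
  isPrefixI_iff.2 (by simp)

lemma IsPrefixI.of_prefix {u v : List A} {x : ℕ → A} (huv : u <+: v) (hv : IsPrefixI v x) :
    IsPrefixI u x := by
  intro i hi
  rw [← hv i (hi.trans_le huv.length_le)]
  simp [huv.getElem hi]

lemma isFactorI_iff {u : List A} {x : ℕ → A} : IsFactorI u x ↔ ∃ n, u <:+: takeI x n := by
  constructor
  · rintro ⟨k, hk⟩
    refine ⟨k + u.length, takeI x k, [], ?_⟩
    rw [takeI_add, List.append_nil, ← isPrefixI_iff.1 hk]
  · rintro ⟨n, l, r, h⟩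
    refine ⟨l.length, fun i hi => ?_⟩
    have hn : l.length + i < (l ++ u ++ r).length := by
      simp only [List.length_append]; omega
    calc u.get ⟨i, hi⟩ = (l ++ u ++ r)[l.length + i] := by
          simp [List.getElem_append_left, List.getElem_append_right, hi]
      _ = x (l.length + i) := by rw [List.getElem_of_eq h]; simp

lemma IsPrefixI.isFactorI {u : List A} {x : ℕ → A} (h : IsPrefixI u x) : IsFactorI u x :=
  ⟨0, fun i hi => by rw [h i hi, Nat.zero_add]⟩

lemma IsFactorI.of_infix {u v : List A} {x : ℕ → A} (huv : u <:+: v) (hv : IsFactorI v x) :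
    IsFactorI u x := by
  obtain ⟨n, hn⟩ := isFactorI_iff.1 hv
  exact isFactorI_iff.2 ⟨n, huv.trans hn⟩

lemma inOrbitClosure_iff {x w : ℕ → A} :
    InOrbitClosure x w ↔ ∀ n, IsFactorI (takeI x n) w :=
  ⟨fun h n => h _ (isPrefixI_takeI x n).isFactorI, fun h u hu => by
    obtain ⟨n, hn⟩ := isFactorI_iff.1 hu
    exact (h n).of_infix hn⟩

end InfiniteWords

theorem exists_forall_takeI_mem {A : Type*} [Finite A] {T : Set (List A)}
    (hT : ∀ u v, u <+: v → v ∈ T → u ∈ T) (hlen : ∀ m, ∃ u ∈ T, m ≤ u.length) :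
    ∃ y : ℕ → A, ∀ n, takeI y n ∈ T := by
  let level (n : ℕ) := {u : List A // u ∈ T ∧ u.length = n}
  have (n : ℕ) : Finite (level n) :=
    Finite.of_injective (β := List.Vector A n) (fun u => ⟨u.1, u.2.2⟩)
      fun _ _ h => Subtype.ext (congrArg List.Vector.toList h)
  have (n : ℕ) : Nonempty (level n) := by
    obtain ⟨u, hu, hnu⟩ := hlen n
    exact ⟨u.take n, hT _ _ (List.take_prefix n u) hu, by simpa using hnu⟩
  obtain ⟨u, hu⟩ := exists_seq_forall_proj_of_forall_finite (α := level)
    (fun {i _} hij u =>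
      ⟨u.1.take i, hT _ _ (List.take_prefix i _) u.2.1, by simp [u.2.2, hij]⟩)
    (fun i u => Subtype.ext (by simp [u.2.2]))
    (fun i j k hij hjk u => Subtype.ext (by simp only [List.take_take, min_eq_left hij]))
    (fun i u => Set.toFinite _)
  refine ⟨fun n => (u (n + 1)).1[n]'(by simp [(u (n + 1)).2.2]), fun n => ?_⟩
  convert (u n).2.1
  refine List.ext_getElem (by simp [(u n).2.2]) fun i hi _ => ?_
  have hin : i + 1 ≤ n := by simpa using hi
  simp [← hu hin]

section Morphisms
variable {A : Type*} (f : A → List A)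

@[simp] lemma morphW_nil : morphW f [] = [] := rfl

@[simp] lemma morphW_append (u v : List A) : morphW f (u ++ v) = morphW f u ++ morphW f v :=
  List.flatMap_append

@[simp] lemma morphW_cons (a : A) (u : List A) : morphW f (a :: u) = f a ++ morphW f u :=
  List.flatMap_cons

lemma morphW_singleton (a : A) : morphW f [a] = f a := by simp

lemma morphW_eq_nil_iff {u : List A} : morphW f u = [] ↔ ∀ a ∈ u, f a = [] :=
  List.flatMap_eq_nil_iff

lemma length_morphW_le {C : ℕ} (hC : ∀ a, (f a).length ≤ C) (u : List A) :
    (morphW f u).length ≤ C * u.length := by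
  induction u with
  | nil => simp
  | cons a u ih => simp only [morphW_cons, List.length_append, List.length_cons]; grind

lemma List.IsPrefix.morphW {u v : List A} (h : u <+: v) : morphW f u <+: morphW f v := by
  obtain ⟨r, rfl⟩ := h
  simp

lemma morphW_morphW (g : A → List A) (u : List A) :
    morphW g (morphW f u) = morphW (fun a => morphW g (f a)) u :=
  List.flatMap_assoc

lemma iterate_morphW (k : ℕ) : (morphW f)^[k] = morphW fun a => (morphW f)^[k] [a] := by
  induction k with
  | zero => funext u; simp [morphW]
  | succ k ih =>
    funext u
    rw [Function.iterate_succ_apply, ih, morphW_morphW]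
    congr 1
    funext a
    rw [Function.iterate_succ_apply, ih]
    simp only [morphW_singleton]

variable {f} {C : ℕ}

lemma exists_eq_morphW_append_of_prefix (hC : ∀ a, (f a).length ≤ C) {p q : List A}
    (h : p <+: morphW f q) : ∃ z t, z <+: q ∧ p = morphW f z ++ t ∧ t.length ≤ C := by
  induction q generalizing p with
  | nil =>
    obtain ⟨v, hv⟩ := h
    exact ⟨[], [], List.nil_prefix, by simp_all, Nat.zero_le C⟩
  | cons b q ih =>
    obtain ⟨v, hv⟩ := h
    rw [morphW_cons] at hv
    rcases List.append_eq_append_iff.1 hv with ⟨r, hr, -⟩ | ⟨p', rfl, hp'⟩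
    · refine ⟨[], p, List.nil_prefix, by simp, ?_⟩
      have := hC b
      rw [hr, List.length_append] at this
      omega
    · obtain ⟨z, t, hz, rfl, ht⟩ := ih ⟨v, hp'.symm⟩
      exact ⟨b :: z, t, List.cons_prefix_cons.2 ⟨rfl, hz⟩, by simp, ht⟩

lemma exists_eq_append_morphW_append_of_infix (hC : ∀ a, (f a).length ≤ C) {p q : List A}
    (h : p <:+: morphW f q) (hp : C < p.length) :
    ∃ a s z t,
      s ≠ [] ∧ s <:+ f a ∧ a :: z <:+: q ∧ p = s ++ morphW f z ++ t ∧ t.length ≤ C := by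
  obtain ⟨u, v, h⟩ := h
  induction q generalizing u with
  | nil => simp_all
  | cons b q ih =>
    rw [morphW_cons, List.append_assoc] at h
    rcases List.append_eq_append_iff.1 h with ⟨s, hs, hpv⟩ | ⟨u', rfl, hu'⟩
    · rcases List.append_eq_append_iff.1 hpv with ⟨r, rfl, -⟩ | ⟨p', rfl, hp'⟩
      · have := hC b
        simp only [hs, List.length_append] at this
        omega
      · by_cases hs0 : s = []
        · subst hs0
          obtain ⟨a, s, z, t, hs, hsa, hz, hpz⟩ := ih [] (by simpa using hp'.symm)
          exact ⟨a, s, z, t, hs, hsa, hz.trans (List.suffix_cons b q).isInfix, hpz⟩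
        · obtain ⟨z, t, hz, rfl, ht⟩ := exists_eq_morphW_append_of_prefix hC ⟨v, hp'.symm⟩
          exact ⟨b, s, z, t, hs0, ⟨u, hs.symm⟩,
            (List.cons_prefix_cons.2 ⟨rfl, hz⟩).isInfix, by simp, ht⟩
    · obtain ⟨a, s, z, t, hs, hsa, hz, hpz⟩ := ih u' (by simpa using hu'.symm)
      exact ⟨a, s, z, t, hs, hsa, hz.trans (List.suffix_cons b q).isInfix, hpz⟩

end Morphisms

section Erasure
variable {A : Type*} (f : A → List A)

lemma exists_iterate_erasure_stable [Finite A] :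
    ∃ k, ∀ a, (morphW f)^[k + 1] [a] = [] → (morphW f)^[k] [a] = [] := by
  let erased : ℕ →o Set A := ⟨fun k => {a | (morphW f)^[k] [a] = []},
    monotone_nat_of_le_succ fun k a ha => by
      simp only [Set.mem_ofPred_eq, Function.iterate_succ_apply'] at ha ⊢
      rw [ha, morphW_nil]⟩
  obtain ⟨k, hk⟩ := WellFoundedGT.monotone_chain_condition erased
  refine ⟨k, fun a ha => ?_⟩
  change a ∈ erased k
  rwa [hk (k + 1) k.le_succ]

theorem length_le_of_erased_runs_le (B : ℕ) (l : List A)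
    (hl : ∀ u, u <:+: l → (∀ a ∈ u, f a = []) → u.length ≤ B) :
    l.length ≤ (B + 1) * ((morphW f l).length + 1) := by
  by_cases hlB : l.length ≤ B
  · nlinarith
  obtain ⟨a, ha, hfa⟩ : ∃ a ∈ l.take (B + 1), f a ≠ [] := by
    by_contra! h
    have := hl _ (List.take_prefix _ _).isInfix h
    rw [List.length_take] at this
    omega
  have hdrop := length_le_of_erased_runs_le B (l.drop (B + 1))
    fun u hu => hl u (hu.trans (List.drop_suffix _ _).isInfix)
  have htake : 1 ≤ (morphW f (l.take (B + 1))).length := by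
    rw [Nat.one_le_iff_ne_zero, Ne, List.length_eq_zero_iff, morphW_eq_nil_iff]
    exact fun h => hfa (h a ha)
  calc l.length = (B + 1) + (l.drop (B + 1)).length := by rw [List.length_drop]; omega
    _ ≤ (B + 1) *
          ((morphW f (l.take (B + 1))).length + (morphW f (l.drop (B + 1))).length + 1) := by
      nlinarith
    _ = (B + 1) * ((morphW f l).length + 1) := by
      rw [← List.length_append, ← morphW_append, List.take_append_drop]
termination_by l.length

end Erasure

lemma InOrbitClosure.exists_lt_length_morphW_takeI {A : Type*} {f : A → List A} {w y : ℕ → A}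
    (hy : InOrbitClosure y w)
    {B : ℕ} (hB : ∀ p, IsFactorI p w → (∀ a ∈ p, f a = []) → p.length ≤ B) (m : ℕ) :
    ∃ n, m < (morphW f (takeI y n)).length := by
  refine ⟨(B + 1) * (m + 2), ?_⟩
  have := length_le_of_erased_runs_le f B (takeI y ((B + 1) * (m + 2)))
    fun u hu => hB u ((inOrbitClosure_iff.1 hy _).of_infix hu)
  rw [length_takeI] at this
  nlinarith

lemma IsFactorI.exists_infix_of_isPrefixI {A : Type*} {p : List A} {w : ℕ → A}
    (hp : IsFactorI p w) {L : ℕ → List A} (hL : ∀ n, IsPrefixI (L n) w)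
    (hgrow : ∀ m, ∃ n, m < (L n).length) (j : ℕ) : ∃ n, j ≤ n ∧ p <:+: L n := by
  obtain ⟨N, hN⟩ := isFactorI_iff.1 hp
  obtain ⟨n, hjn, hn⟩ := exists_le_lt_of_unbounded (fun n => (L n).length) hgrow j N
  refine ⟨n, hjn, hN.trans (List.IsPrefix.isInfix ?_)⟩
  rw [isPrefixI_iff.1 (hL n)]
  exact takeI_prefix_takeI w hn.le

section FixedPoint
variable {A : Type*} [Finite A] {f : A → List A} {α : A} {w : ℕ → A}
  (hfix : ∀ n, IsPrefixI ((morphW f)^[n] [α]) w)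
  (hgrow : ∀ m, ∃ n, m < ((morphW f)^[n] [α]).length)
include hfix hgrow

theorem exists_erased_run_bound :
    ∃ B, ∀ p, IsFactorI p w → (∀ a ∈ p, f a = []) → p.length ≤ B := by
  obtain ⟨k, hk⟩ := exists_iterate_erasure_stable f
  set g := fun a => (morphW f)^[k] [a]
  obtain ⟨D, hD⟩ := Finite.exists_le fun a => (g a).length
  refine ⟨2 * D, fun p hp hpe => ?_⟩
  by_contra! hlong
  obtain ⟨n, hkn, hpn⟩ := hp.exists_infix_of_isPrefixI hfix hgrow k
  rw [← Nat.add_sub_cancel' hkn, Function.iterate_add_apply, iterate_morphW f k] at hpn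
  obtain ⟨a, s, z, t, -, hs, -, rfl, ht⟩ :=
    exists_eq_append_morphW_append_of_infix hD hpn (by omega)
  obtain ⟨c, hcz, hc⟩ : ∃ c ∈ z, g c ≠ [] := by
    by_contra! h
    have := hs.length_le.trans (hD a)
    simp only [(morphW_eq_nil_iff g).2 h, List.append_nil, List.length_append] at hlong
    omega
  refine hc (hk c ?_)
  rw [Function.iterate_succ_apply', morphW_eq_nil_iff]
  exact fun d hd => hpe d (by
    simp only [morphW, List.mem_append, List.mem_flatMap]
    exact .inl (.inr ⟨c, hcz, hd⟩))

theorem exists_suffix_append_morphW_isPrefixI {x : ℕ → A} (hx : InOrbitClosure x w) (m : ℕ) :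
    ∃ a s z, s ≠ [] ∧ s <:+ f a ∧ m ≤ z.length ∧ IsFactorI (a :: z) w ∧
      IsPrefixI (s ++ morphW f z) x := by
  obtain ⟨C, hC⟩ := Finite.exists_le fun a => (f a).length
  -- since `|s|, |t| ≤ C` and `|f(z)| ≤ C |z|`, a prefix of length `N` forces `m ≤ |z|`
  set N := (C + 1) * (m + 2)
  obtain ⟨n, hn, hxn⟩ := (inOrbitClosure_iff.1 hx N).exists_infix_of_isPrefixI hfix hgrow 1
  rw [← Nat.sub_add_cancel hn, Function.iterate_succ_apply'] at hxn
  obtain ⟨a, s, z, t, hs, hsa, hz, hxN, ht⟩ :=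
    exists_eq_append_morphW_append_of_infix hC hxn (by simp only [length_takeI, N]; nlinarith)
  refine ⟨a, s, z, hs, hsa, ?_, (hfix _).isFactorI.of_infix hz,
    (isPrefixI_takeI x N).of_prefix (hxN ▸ List.prefix_append _ _)⟩
  have hN := congrArg List.length hxN
  have := length_morphW_le f hC z
  have := hsa.length_le.trans (hC a)
  simp only [List.length_append, length_takeI, N] at hN
  nlinarith

end FixedPoint

theorem morphic_suffix_decomposition {A : Type*} [Fintype A]
    (fA : A → List A) (α : A) (w : ℕ → A)
    (hfix : ∀ n, IsPrefixI ((morphW fA)^[n] [α]) w)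
    (hgrow : ∀ m, ∃ n, m < ((morphW fA)^[n] [α]).length)
    (x : ℕ → A) (hx : InOrbitClosure x w) :
    ∃ (a : A) (s : List A) (y : ℕ → A),
      s ≠ [] ∧ s <:+ fA a ∧
      EqSuffixImage x s fA y ∧
      InOrbitClosure y w ∧
      InOrbitClosure (consI a y) w := by
  classical
  obtain ⟨B, hB⟩ := exists_erased_run_bound hfix hgrow
  let T (a : A) (s : List A) : Set (List A) :=
    {z | IsFactorI (a :: z) w ∧ IsPrefixI (s ++ morphW fA z) x}
  have hT (a : A) (s : List A) (u v : List A) (huv : u <+: v) (hv : v ∈ T a s) : u ∈ T a s :=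
    ⟨hv.1.of_infix (List.cons_prefix_cons.2 ⟨rfl, huv⟩).isInfix,
      hv.2.of_prefix ((List.prefix_append_right_inj s).2 (huv.morphW fA))⟩
  obtain ⟨⟨a, s, hsa⟩, hlong⟩ := exists_forall_of_forall_exists_antitone
    (ι := (a : A) × {s // s ∈ (fA a).tails})
    (P := fun i m => i.2.1 ≠ [] ∧ ∃ z ∈ T i.1 i.2.1, m ≤ z.length)
    (fun _ _ _ hmn ⟨hs, z, hz, hnz⟩ => ⟨hs, z, hz, hmn.trans hnz⟩)
    fun m => by
      obtain ⟨a, s, z, hs, hsa, hmz, hz⟩ :=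
        exists_suffix_append_morphW_isPrefixI hfix hgrow hx m
      exact ⟨⟨a, s, (List.mem_tails _ _).2 hsa⟩, hs, z, hz, hmz⟩
  obtain ⟨y, hy⟩ := exists_forall_takeI_mem (hT a s) fun m => (hlong m).2
  have hfac (n : ℕ) : IsFactorI (a :: takeI y n) w := (hy n).1
  have hyw : InOrbitClosure y w :=
    inOrbitClosure_iff.2 fun n => (hfac n).of_infix (List.suffix_cons a _).isInfix
  refine ⟨a, s, y, (hlong 0).1, (List.mem_tails _ _).1 hsa, ⟨fun n => (hy n).2, fun m => ?_⟩,
    hyw, inOrbitClosure_iff.2 fun n => (hfac n).of_infix ?_⟩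
  · obtain ⟨n, hn⟩ := hyw.exists_lt_length_morphW_takeI hB m
    exact ⟨n, hn.trans_le (List.suffix_append s _).length_le⟩
  · exact takeI_consI_succ a y n ▸ (takeI_prefix_takeI _ n.le_succ).isInfix
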